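/- arXiv:0912.3054 — 5 statements merged into one kernel-verified Lean document; each statement's English description precedes it below -/
import Mathlib

section
/- Let n ≥ 1, let ε_{ji} (1 ≤ i < j ≤ n) be integers, set f_j = ∑_{i=1}^{j−1} ε_{ji}·x_i, and let B = ℤ[x₁,…,x_n]/⟨x_j(x_j − f_j) : 1 ≤ j ≤ n⟩. For α = ∑_{j=1}^n a_j·x_j with integer coefficients a_j, one has α² = 0 in B if and only if a_j²·ε_{ji} = −2·a_j·a_i for all 1 ≤ i < j ≤ n. -/
open MvPolynomial

/-- `f j = ∑_{i < j} ε j i • x i`, the twisting class of the `j`-th stage. -/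
noncomputable def bottF (n : ℕ) (ε : Fin n → Fin n → ℤ) (j : Fin n) :
    MvPolynomial (Fin n) ℤ :=
  ∑ i : Fin n, if i < j then C (ε j i) * X i else 0

/-- The defining ideal `⟨x_j (x_j - f_j) : j⟩` of the Bott ring. -/
noncomputable def bottIdeal (n : ℕ) (ε : Fin n → Fin n → ℤ) :
    Ideal (MvPolynomial (Fin n) ℤ) :=
  Ideal.span (Set.range fun j : Fin n => X j * (X j - bottF n ε j))

/-!
In any commutative ring, elements satisfying the Bott relations `x_j² = ∑_{i<j} ε_ji x_i x_j`
give `(∑ a_j x_j)² = ∑_{i<j} (a_j² ε_ji + 2 a_j a_i) x_i x_j`; applied in `B` this proves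
sufficiency. For necessity, fix `i < j` and map `B` to `ℤ[δ₁, δ₂]/(δ₁², δ₂²)` by `x_i ↦ 2δ₁`,
`x_j ↦ ε_ji δ₁ + δ₂`, `x_k ↦ 0` otherwise. This respects the relations and sends `α²` to
`2 a_j (2 a_i + a_j ε_ji) δ₁δ₂`, which vanishes only if the coefficient does.
-/

open Finset

theorem sq_sum_eq_sum_sq_add_two_mul_sum_lt {ι R : Type*} [Fintype ι] [LinearOrder ι]
    [CommSemiring R] (y : ι → R) :
    (∑ j, y j) ^ 2 = ∑ j, y j ^ 2 + 2 * ∑ j, ∑ i with i < j, y i * y j := by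
  have hsplit : ∀ i j : ι, y i * y j = (if i < j then y i * y j else 0)
      + (if j < i then y j * y i else 0) + (if i = j then y j ^ 2 else 0) := by
    intro i j
    rcases lt_trichotomy i j with h | rfl | h
    · rw [if_pos h, if_neg h.not_gt, if_neg h.ne, add_zero, add_zero]
    · simp [sq]
    · rw [if_neg h.not_gt, if_pos h, if_neg h.ne', zero_add, add_zero, mul_comm]
  rw [sq, sum_mul_sum, sum_congr rfl fun i _ => sum_congr rfl fun j _ => hsplit i j]
  simp only [sum_add_distrib, sum_ite_eq, mem_univ, if_true]
  rw [sum_comm (f := fun i j => if i < j then y i * y j else 0)]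
  simp only [← sum_filter, two_mul]
  abel

def IsBottFamily {ι S : Type*} [Fintype ι] [LinearOrder ι] [CommRing S] (ε : ι → ι → ℤ)
    (x : ι → S) : Prop :=
  ∀ j, x j ^ 2 = ∑ i with i < j, (ε j i : S) * (x i * x j)

theorem IsBottFamily.sq_sum_intCast_mul {ι S : Type*} [Fintype ι] [LinearOrder ι] [CommRing S]
    {ε : ι → ι → ℤ} {x : ι → S} (hx : IsBottFamily ε x) (a : ι → ℤ) :
    (∑ j, (a j : S) * x j) ^ 2 =
      ∑ j, ∑ i with i < j, ((a j ^ 2 * ε j i + 2 * (a j * a i) : ℤ) : S) * (x i * x j) := by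
  rw [sq_sum_eq_sum_sq_add_two_mul_sum_lt, mul_sum, ← sum_add_distrib]
  refine sum_congr rfl fun j _ => ?_
  rw [mul_pow, hx j, mul_sum, mul_sum, ← sum_add_distrib]
  refine sum_congr rfl fun i _ => ?_
  push_cast
  ring

section BottRing

variable {n : ℕ} {S : Type*} [CommRing S]

theorem map_sum_C_mul_X (φ : MvPolynomial (Fin n) ℤ →+* S) (a : Fin n → ℤ) :
    φ (∑ j, C (a j) * X j) = ∑ j, (a j : S) * φ (X j) := by
  simp

theorem map_bottF (ε : Fin n → Fin n → ℤ) (φ : MvPolynomial (Fin n) ℤ →+* S) (j : Fin n) :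
    φ (bottF n ε j) = ∑ i with i < j, (ε j i : S) * φ (X i) := by
  simp [bottF, sum_filter, apply_ite φ]

theorem bottIdeal_le_ker_iff (ε : Fin n → Fin n → ℤ) (φ : MvPolynomial (Fin n) ℤ →+* S) :
    bottIdeal n ε ≤ RingHom.ker φ ↔ IsBottFamily ε fun j => φ (X j) := by
  simp only [bottIdeal, Ideal.span_le, Set.range_subset_iff, SetLike.mem_coe, RingHom.mem_ker,
    IsBottFamily]
  refine forall_congr' fun j => ?_
  rw [map_mul, map_sub, map_bottF, mul_sub, sub_eq_zero, sq, mul_sum]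
  simp only [mul_left_comm (φ (X j)), mul_comm (φ (X j))]

end BottRing

section TestRing

open TrivSqZeroExt

variable {n : ℕ}

local notation "D" => DualNumber (DualNumber ℤ)

local notation "δ₁" => (DualNumber.eps : D)

local notation "δ₂" => (inl DualNumber.eps : D)

theorem inl_eps_mul_inl_eps : δ₂ * δ₂ = 0 := by
  rw [← inl_mul, DualNumber.eps_mul_eps, inl_zero]

theorem intCast_mul_eps_mul_inl_eps_eq_zero_iff (c : ℤ) : (c : D) * (δ₁ * δ₂) = 0 ↔ c = 0 := by
  refine ⟨fun h => ?_, fun h => by simp [h]⟩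
  simpa using congrArg (fun z => z.snd.snd) h

-- `x_i ↦ 2δ₁` keeps the image of `x_j` integral: `x_j (x_j - ε_ji x_i) ↦ δ₂² - ε_ji² δ₁² = 0`.
noncomputable def bottTestPoint (ε : Fin n → Fin n → ℤ) (i j : Fin n) (k : Fin n) : D :=
  if k = i then 2 * δ₁ else if k = j then (ε j i : D) * δ₁ + δ₂ else 0

theorem isBottFamily_bottTestPoint (ε : Fin n → Fin n → ℤ) {i j : Fin n} (hij : i < j) :
    IsBottFamily ε (bottTestPoint ε i j) := by
  have hy : ∀ k, k ≠ i → k ≠ j → bottTestPoint ε i j k = 0 := fun k hi hj => by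
    simp [bottTestPoint, hi, hj]
  intro k
  by_cases hki : k = i
  · subst hki
    rw [sum_eq_zero fun l hl => by
      rw [hy l (mem_filter.1 hl).2.ne ((mem_filter.1 hl).2.trans hij).ne, zero_mul, mul_zero]]
    simp only [bottTestPoint, if_pos]
    linear_combination 4 * DualNumber.eps_mul_eps (R := DualNumber ℤ)
  by_cases hkj : k = j
  · subst hkj
    rw [sum_eq_single_of_mem i (mem_filter.2 ⟨mem_univ _, hij⟩) fun l hl hli => by
      rw [hy l hli (mem_filter.1 hl).2.ne, zero_mul, mul_zero]]
    simp only [bottTestPoint, if_pos, if_neg hij.ne']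
    linear_combination -(ε k i : D) ^ 2 * DualNumber.eps_mul_eps (R := DualNumber ℤ) +
      inl_eps_mul_inl_eps
  · simp [hy k hki hkj]

theorem bott_relation_of_sq_eq_zero (ε : Fin n → Fin n → ℤ) (a : Fin n → ℤ)
    (h : Ideal.Quotient.mk (bottIdeal n ε) (∑ j, C (a j) * X j) ^ 2 = 0) {i j : Fin n}
    (hij : i < j) : a j ^ 2 * ε j i = -2 * (a j * a i) := by
  let φ : MvPolynomial (Fin n) ℤ →+* D := (aeval (bottTestPoint ε i j)).toRingHom
  have hker : bottIdeal n ε ≤ RingHom.ker φ :=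
    (bottIdeal_le_ker_iff ε φ).2 (by simpa [φ] using isBottFamily_bottTestPoint ε hij)
  have hα : φ (∑ j, C (a j) * X j) = ((2 * a i + a j * ε j i : ℤ) : D) * δ₁ + (a j : D) * δ₂ := by
    rw [map_sum_C_mul_X, Fintype.sum_eq_add i j hij.ne fun k hk => ?_]
    · simp [φ, bottTestPoint, hij.ne']
      ring
    · simp [φ, bottTestPoint, hk.1, hk.2]
  rw [← map_pow, Ideal.Quotient.eq_zero_iff_mem] at h
  have h0 := hker h
  rw [RingHom.mem_ker, map_pow, hα] at h0
  have hc : ((2 * (a j * (2 * a i + a j * ε j i)) : ℤ) : D) * (δ₁ * δ₂) = 0 := by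
    rw [← h0]
    push_cast
    linear_combination (-(2 * a i + a j * ε j i : D) ^ 2) *
      DualNumber.eps_mul_eps (R := DualNumber ℤ) - (a j : D) ^ 2 * inl_eps_mul_inl_eps
  rw [intCast_mul_eps_mul_inl_eps_eq_zero_iff] at hc
  linarith

end TestRing

theorem stmt3_general (n : ℕ) (ε : Fin n → Fin n → ℤ) (a : Fin n → ℤ) :
    (Ideal.Quotient.mk (bottIdeal n ε) (∑ j : Fin n, C (a j) * X j)) ^ 2 = 0 ↔
      ∀ i j : Fin n, i < j → (a j) ^ 2 * ε j i = -2 * (a j * a i) := by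
  refine ⟨fun h i j hij => bott_relation_of_sq_eq_zero ε a h hij, fun h => ?_⟩
  have hx := (bottIdeal_le_ker_iff ε (Ideal.Quotient.mk (bottIdeal n ε))).1 Ideal.mk_ker.ge
  rw [map_sum_C_mul_X, hx.sq_sum_intCast_mul]
  refine sum_eq_zero fun j _ => sum_eq_zero fun i hi => ?_
  rw [h i j (mem_filter.1 hi).2, neg_mul, neg_add_cancel, Int.cast_zero, zero_mul]

/-- In the Bott ring `ℤ[x₁,…,x_n]/⟨x_j(x_j - f_j)⟩`, the element `α = ∑ a_j x_j` squares to
zero iff `a_j ^ 2 * ε j i = -2 * a_j * a_i` for all `i < j`. -/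
theorem stmt3 (n : ℕ) (hn : 1 ≤ n) (ε : Fin n → Fin n → ℤ) (a : Fin n → ℤ) :
    (Ideal.Quotient.mk (bottIdeal n ε) (∑ j : Fin n, C (a j) * X j)) ^ 2 = 0 ↔
      ∀ i j : Fin n, i < j → (a j) ^ 2 * ε j i = -2 * (a j * a i) :=
  stmt3_general n ε a
end

section
/- Let S_m = ℤ[x₁,…,x_m]/⟨x₁²,…,x_m²⟩ and let u = ∑ u_i·x_i and v = ∑ v_i·x_i be elements of its degree-2 part with uv = 0 in S_m. If at least three of the coefficients u_i are nonzero, then v = 0. -/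
open MvPolynomial
open Finsupp

lemma sf_coeff {m : ℕ} {p : MvPolynomial (Fin m) ℤ}
    (hp : p ∈ Ideal.span (Set.range fun i : Fin m => (X i : MvPolynomial (Fin m) ℤ) ^ 2)) :
    ∀ d : Fin m →₀ ℕ, (∀ k, d k ≤ 1) → MvPolynomial.coeff d p = 0 := by
  refine Submodule.span_induction ?_ ?_ ?_ ?_ hp
  · rintro x ⟨i, rfl⟩ d hd
    simp only []
    show MvPolynomial.coeff d (X i ^ 2) = 0
    rw [X_pow_eq_monomial, coeff_monomial]
    rw [if_neg]
    intro h
    have := hd i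
    rw [← h] at this
    simp at this
  · intro d hd; simp
  · intro x y _ _ hx hy d hd
    simp [coeff_add, hx d hd, hy d hd]
  · intro a x _ hx d hd
    rw [smul_eq_mul, coeff_mul]
    refine Finset.sum_eq_zero fun z hz => ?_
    rw [Finset.HasAntidiagonal.mem_antidiagonal] at hz
    rw [hx z.2 (fun k => le_trans (by simp [← hz]) (hd k)), mul_zero]

lemma single_pair {m : ℕ} {i j a b : Fin m} (hij : i ≠ j)
    (h : single a 1 + single b 1 = single i 1 + single j 1) :
    (a = i ∧ b = j) ∨ (a = j ∧ b = i) := by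
  have ha := DFunLike.congr_fun h a
  by_cases hai : a = i
  · subst hai
    left
    refine ⟨rfl, ?_⟩
    have := add_left_cancel h
    exact (Finsupp.single_left_injective one_ne_zero).eq_iff.mp this |>.symm ▸ rfl
  · by_cases haj : a = j
    · subst haj
      right
      refine ⟨rfl, ?_⟩
      rw [add_comm (single i 1)] at h
      have := add_left_cancel h
      exact Finsupp.single_left_injective one_ne_zero this
    · exfalso
      simp [Finsupp.single_apply, hai, haj, Ne.symm hai, Ne.symm haj] at ha

lemma coeff_pair {m : ℕ} (u v : Fin m → ℤ) {i j : Fin m} (hij : i ≠ j) :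
    MvPolynomial.coeff (single i 1 + single j 1)
      ((∑ a : Fin m, C (u a) * X a) * (∑ b : Fin m, C (v b) * X b)) =
    u i * v j + u j * v i := by
  rw [Finset.sum_mul_sum]
  simp_rw [C_mul_X_eq_monomial, monomial_mul]
  rw [coeff_sum]
  simp_rw [coeff_sum, coeff_monomial]
  have key : ∀ a b : Fin m,
      (if single a 1 + single b 1 = single i 1 + single j 1 then u a * v b else 0) =
      (if a = i ∧ b = j then u a * v b else 0) + (if a = j ∧ b = i then u a * v b else 0) := by
    intro a b
    by_cases h1 : a = i ∧ b = j
    · obtain ⟨rfl, rfl⟩ := h1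
      rw [if_pos rfl, if_pos ⟨rfl, rfl⟩, if_neg (by rintro ⟨h, -⟩; exact hij h), add_zero]
    · by_cases h2 : a = j ∧ b = i
      · obtain ⟨rfl, rfl⟩ := h2
        rw [if_pos (add_comm _ _), if_neg h1, if_pos ⟨rfl, rfl⟩, zero_add]
      · rw [if_neg, if_neg h1, if_neg h2, add_zero]
        intro h
        rcases single_pair hij h with h | h
        · exact h1 h
        · exact h2 h
  simp_rw [key]
  simp [Finset.sum_add_distrib, ite_and, Finset.sum_ite_eq, Finset.sum_ite_eq']

/-- The defining ideal `⟨x₁²,…,x_m²⟩` of `S_m = H^*((ℂP¹)^m ; ℤ)`. -/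
noncomputable def sqIdeal (m : ℕ) : Ideal (MvPolynomial (Fin m) ℤ) :=
  Ideal.span (Set.range fun i : Fin m => (X i) ^ 2)

/-- In `S_m`, if `u v = 0` and at least three coefficients of `u` are nonzero, then `v = 0`. -/
theorem stmt5 (m : ℕ) (u v : Fin m → ℤ)
    (huv : (Ideal.Quotient.mk (sqIdeal m) (∑ i : Fin m, C (u i) * X i)) *
      (Ideal.Quotient.mk (sqIdeal m) (∑ i : Fin m, C (v i) * X i)) = 0)
    (hthree : 3 ≤ (Finset.univ.filter fun i => u i ≠ 0).card) :
    Ideal.Quotient.mk (sqIdeal m) (∑ i : Fin m, C (v i) * X i) = 0 := by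
  rw [← map_mul, Ideal.Quotient.eq_zero_iff_mem] at huv
  have hrel : ∀ a b : Fin m, a ≠ b → u a * v b + u b * v a = 0 := by
    intro a b hab
    have h1 := sf_coeff huv (single a 1 + single b 1) (by
      intro k
      simp only [Finsupp.add_apply, Finsupp.single_apply]
      split_ifs with h h' h' <;> omega)
    rw [coeff_pair u v hab] at h1
    exact h1
  obtain ⟨i, j, k, hi, hj, hk, hij, hik, hjk⟩ :=
    Finset.two_lt_card_iff.mp (by omega : 2 < (Finset.univ.filter fun i => u i ≠ 0).card)
  rw [Finset.mem_filter] at hi hj hk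
  have hui := hi.2; have huj := hj.2; have huk := hk.2
  have e1 : u i * v j = -(u j * v i) := by have := hrel i j hij; linarith
  have e2 : u j * v k = -(u k * v j) := by have := hrel j k hjk; linarith
  have e3 : u k * v i = -(u i * v k) := by have := hrel k i (Ne.symm hik); linarith
  have hq : u i * u j * u k * (v i * v j * v k) = 0 := by
    have hc : u i * u j * u k * (v i * v j * v k)
        = -(u i * u j * u k * (v i * v j * v k)) := by
      calc u i * u j * u k * (v i * v j * v k)
          = (u i * v j) * ((u j * v k) * (u k * v i)) := by ring
        _ = (-(u j * v i)) * ((-(u k * v j)) * (-(u i * v k))) := by rw [e1, e2, e3]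
        _ = -(u i * u j * u k * (v i * v j * v k)) := by ring
    linarith
  have : ∃ t : Fin m, u t ≠ 0 ∧ v t = 0 := by
    rcases mul_eq_zero.mp hq with h | h
    · exact absurd h (mul_ne_zero (mul_ne_zero hui huj) huk)
    · rcases mul_eq_zero.mp h with h | h
      · rcases mul_eq_zero.mp h with h | h
        · exact ⟨i, hui, h⟩
        · exact ⟨j, huj, h⟩
      · exact ⟨k, huk, h⟩
  obtain ⟨t, hut, hvt⟩ := this
  have hv : ∀ l, v l = 0 := by
    intro l
    by_cases hlt : l = t
    · rw [hlt]; exact hvt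
    · have := hrel t l (fun h => hlt h.symm)
      rw [hvt, mul_zero, add_zero] at this
      exact (mul_eq_zero.mp this).resolve_left hut
  have : (∑ i : Fin m, C (v i) * X i : MvPolynomial (Fin m) ℤ) = 0 := by
    simp [hv]
  rw [this, map_zero]
end

section
/- Let A = (a_{ij}) be an n×n integer matrix with a_{jj} = 1 for all j and such that every 2×2 principal minor of A equals ±1 (i.e., 1 − a_{ij}·a_{ji} = ±1 for all i ≠ j). Let ε_{ji} (1 ≤ i < j ≤ n) be integers and f_j = ∑_{i<j} ε_{ji}·x_i. If there exists a ring isomorphism between ℤ[x₁,…,x_n]/⟨x_j(x_j − f_j) : j⟩ and R_A = ℤ[y₁,…,y_n]/⟨y_j·(∑_{i=1}^n a_{ji}·y_i) : j⟩ carrying the ℤ-span of the generators x₁,…,x_n onto the ℤ-span of the generators y₁,…,y_n, then a_{ij}·a_{ji} = 0 for all i ≠ j. -/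
/-!
The isomorphism sends each `x_j` to a linear form `ℓ_j = ∑ G_{jt} y_t`, and the relation
`x_j (x_j - f_j)` to a product `ℓ_j ℓ'_j` vanishing in `R_A`. Substituting `y ↦ z T` and reading
off the coefficient of `T²`, such a product equals `∑ c_k z_k (A z)_k` as a quadratic form in `z`.
If `a_{pq} a_{qp} = 2` and `ℓ_j, ℓ'_j` have the same coefficients `v_p, v_q` at `y_p, y_q`,
restricting to the `(p, q)`-plane gives `2 v_p v_q = a_{pq} v_p² + a_{qp} v_q²`, which forces
`v_p = v_q = 0`.
Since `ℓ'_j - ℓ_j` is a combination of earlier `ℓ_i`, induction on `j` kills the `p`-th column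
of `G`, so `y_p` is not in the image of the span of the `x_j`.
-/

open MvPolynomial

/-- The defining ideal `⟨y_j · (∑ i, a_{ji} y_i) : j⟩` of the cohomology ring `R_A` of a
quasitoric manifold over a cube with characteristic data `A`. -/
noncomputable def quasiIdeal (n : ℕ) (A : Matrix (Fin n) (Fin n) ℤ) :
    Ideal (MvPolynomial (Fin n) ℤ) :=
  Ideal.span (Set.range fun j : Fin n => X j * ∑ i : Fin n, C (A j i) * X i)

open Matrix

section LinearForms

variable {σ R : Type*} [CommRing R]

noncomputable def lineSubst (z : σ → R) : MvPolynomial σ R →ₐ[R] Polynomial R :=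
  aeval fun i => Polynomial.C (z i) * Polynomial.X

lemma lineSubst_X (z : σ → R) (i : σ) :
    lineSubst z (X i) = Polynomial.C (z i) * Polynomial.X :=
  aeval_X _ _

lemma coeff_zero_lineSubst (z : σ → R) (F : MvPolynomial σ R) :
    (lineSubst z F).coeff 0 = constantCoeff F := by
  suffices Polynomial.constantCoeff.comp (lineSubst z).toRingHom = constantCoeff from
    congrArg (· F) this
  refine ringHom_ext (fun r => ?_) (fun i => ?_)
  · simp [lineSubst]
  · simp [lineSubst_X]

variable [Fintype σ]

noncomputable def linForm (v : σ → R) : MvPolynomial σ R :=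
  ∑ i, C (v i) * X i

lemma linForm_sub (v w : σ → R) : linForm (v - w) = linForm v - linForm w := by
  simp [linForm, sub_mul, Finset.sum_sub_distrib]

lemma linForm_single [DecidableEq σ] (j : σ) : linForm (Pi.single j (1 : R)) = X j := by
  rw [linForm, Finset.sum_eq_single j] <;> simp +contextual

lemma mk_linForm (I : Ideal (MvPolynomial σ R)) (v : σ → R) :
    Ideal.Quotient.mk I (linForm v) = ∑ i, v i • Ideal.Quotient.mk I (X i) := by
  simp only [linForm, map_sum, ← smul_eq_C_mul, ← Ideal.Quotient.mkₐ_eq_mk R, map_smul]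

lemma mem_span_mk_X_iff (I : Ideal (MvPolynomial σ R)) {x : MvPolynomial σ R ⧸ I} :
    x ∈ Submodule.span R (Set.range fun i => Ideal.Quotient.mk I (X i)) ↔
      ∃ v, Ideal.Quotient.mk I (linForm v) = x := by
  simp only [Submodule.mem_span_range_iff_exists_fun, mk_linForm]

lemma lineSubst_linForm (z v : σ → R) :
    lineSubst z (linForm v) = Polynomial.C (v ⬝ᵥ z) * Polynomial.X := by
  simp only [linForm, map_sum, map_mul, lineSubst_X, algHom_C, Polynomial.algebraMap_eq,
    dotProduct, Finset.sum_mul, map_sum, map_mul]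
  exact Finset.sum_congr rfl fun i _ => by ring

end LinearForms

section GradedIsomorphism

variable {σ : Type*} [Fintype σ] {I J : Ideal (MvPolynomial σ ℤ)}
  (ψ : (MvPolynomial σ ℤ ⧸ I) →+* (MvPolynomial σ ℤ ⧸ J))

lemma exists_map_mk_linForm_eq_vecMul
    (h : Submodule.map ψ.toIntAlgHom.toLinearMap
        (Submodule.span ℤ (Set.range fun i => Ideal.Quotient.mk I (X i))) ≤
      Submodule.span ℤ (Set.range fun i => Ideal.Quotient.mk J (X i))) :
    ∃ G : Matrix σ σ ℤ, ∀ v, ψ (Ideal.Quotient.mk I (linForm v)) =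
      Ideal.Quotient.mk J (linForm (v ᵥ* G)) := by
  have hX : ∀ j, ∃ g, Ideal.Quotient.mk J (linForm g) = ψ (Ideal.Quotient.mk I (X j)) :=
    fun j => (mem_span_mk_X_iff J).mp
      (h (Submodule.mem_map_of_mem (Submodule.subset_span (Set.mem_range_self j))))
  choose G hG using hX
  refine ⟨G, fun v => ?_⟩
  simp only [mk_linForm, map_sum, map_zsmul, ← hG, Finset.smul_sum, vecMul, dotProduct,
    Finset.sum_smul, mul_smul]
  exact Finset.sum_comm

lemma exists_map_mk_linForm_eq
    (h : Submodule.span ℤ (Set.range fun i => Ideal.Quotient.mk J (X i)) ≤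
      Submodule.map ψ.toIntAlgHom.toLinearMap
        (Submodule.span ℤ (Set.range fun i => Ideal.Quotient.mk I (X i))))
    (w : σ → ℤ) : ∃ v, ψ (Ideal.Quotient.mk I (linForm v)) = Ideal.Quotient.mk J (linForm w) := by
  obtain ⟨x, hx, hψx⟩ := h ((mem_span_mk_X_iff J).mpr ⟨w, rfl⟩)
  obtain ⟨v, rfl⟩ := (mem_span_mk_X_iff I).mp hx
  exact ⟨v, hψx⟩

end GradedIsomorphism

section QuasitoricRing

variable {n : ℕ} {A : Matrix (Fin n) (Fin n) ℤ}

lemma lineSubst_quasiIdeal_generator (z : Fin n → ℤ) (k : Fin n) :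
    lineSubst z (X k * ∑ i : Fin n, C (A k i) * X i) =
      Polynomial.C (z k * (A *ᵥ z) k) * Polynomial.X ^ 2 := by
  rw [map_mul, lineSubst_X, show ∑ i, C (A k i) * X i = linForm (A k) from rfl,
    lineSubst_linForm, map_mul]
  simp only [mulVec]
  ring

/-- Each generator of the ideal becomes a multiple of `T²`, so only the constant terms of their
coefficients survive in degree `2`. -/
lemma exists_coeff_lineSubst_of_mem_quasiIdeal {F : MvPolynomial (Fin n) ℤ}
    (hF : F ∈ quasiIdeal n A) :
    ∃ c : Fin n → ℤ, ∀ z, (lineSubst z F).coeff 1 = 0 ∧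
      (lineSubst z F).coeff 2 = ∑ k, c k * (z k * (A *ᵥ z) k) := by
  obtain ⟨h, rfl⟩ := Ideal.mem_span_range_iff_exists_fun.mp hF
  refine ⟨fun k => constantCoeff (h k), fun z => ?_⟩
  have hsubst : lineSubst z (∑ k, h k * (X k * ∑ i, C (A k i) * X i)) =
      (∑ k, lineSubst z (h k) * Polynomial.C (z k * (A *ᵥ z) k)) * Polynomial.X ^ 2 := by
    rw [map_sum, Finset.sum_mul]
    refine Finset.sum_congr rfl fun k _ => ?_
    rw [map_mul, lineSubst_quasiIdeal_generator, mul_assoc]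
  rw [hsubst, Polynomial.coeff_mul_X_pow', Polynomial.coeff_mul_X_pow']
  simp only [Nat.not_ofNat_le_one, if_false, le_refl, if_true, Nat.sub_self,
    Polynomial.finsetSum_coeff, Polynomial.coeff_mul_C, coeff_zero_lineSubst, true_and]

lemma eq_of_linForm_sub_mem_quasiIdeal {v w : Fin n → ℤ}
    (h : linForm v - linForm w ∈ quasiIdeal n A) : v = w := by
  rw [← linForm_sub] at h
  obtain ⟨c, hc⟩ := exists_coeff_lineSubst_of_mem_quasiIdeal h
  funext i
  have := (hc (Pi.single i 1)).1
  rw [lineSubst_linForm, Polynomial.coeff_C_mul_X, if_pos rfl, dotProduct_single_one] at this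
  exact sub_eq_zero.mp this

lemma exists_mul_dotProduct_eq_of_mem_quasiIdeal {v w : Fin n → ℤ}
    (h : linForm v * linForm w ∈ quasiIdeal n A) :
    ∃ c : Fin n → ℤ, ∀ z, (v ⬝ᵥ z) * (w ⬝ᵥ z) = ∑ k, c k * (z k * (A *ᵥ z) k) := by
  obtain ⟨c, hc⟩ := exists_coeff_lineSubst_of_mem_quasiIdeal h
  refine ⟨c, fun z => ?_⟩
  rw [← (hc z).2, map_mul, lineSubst_linForm, lineSubst_linForm, show Polynomial.C (v ⬝ᵥ z) * Polynomial.X * (Polynomial.C (w ⬝ᵥ z) * Polynomial.X) =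
    Polynomial.C ((v ⬝ᵥ z) * (w ⬝ᵥ z)) * Polynomial.X ^ 2 by rw [map_mul]; ring,
    Polynomial.coeff_C_mul_X_pow, if_pos rfl]

/-- The binary form `a x² - 2 x y + b y²` has discriminant `4 (1 - a b) < 0`. -/
lemma Int.eq_zero_of_two_mul_mul_eq {a b x y : ℤ} (hab : a * b = 2)
    (h : 2 * x * y = a * x ^ 2 + b * y ^ 2) : x = 0 ∧ y = 0 := by
  have hsq : (a * x - y) ^ 2 + y ^ 2 = 0 := by linear_combination (-a) * h - y ^ 2 * hab
  have hy : y = 0 := by nlinarith [sq_nonneg (a * x - y), sq_nonneg y]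
  subst hy
  have ha : a ≠ 0 := by rintro rfl; simp at hab
  simpa [ha] using h.symm

lemma eq_zero_of_mul_dotProduct_eq {p q : Fin n} (hp : A p p = 1) (hq : A q q = 1)
    (hA : A p q * A q p = 2) {v w c : Fin n → ℤ}
    (hc : ∀ z, (v ⬝ᵥ z) * (w ⬝ᵥ z) = ∑ k, c k * (z k * (A *ᵥ z) k))
    (hwp : w p = v p) (hwq : w q = v q) : v p = 0 ∧ v q = 0 := by
  have e₁ := hc (Pi.single p 1)
  have e₂ := hc (Pi.single q 1)
  have e₃ := hc (Pi.single p 1 + Pi.single q 1)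
  simp [dotProduct_add, mulVec_add, Pi.single_apply, hp, hq, hwp, hwq,
    mul_add, add_mul, Finset.sum_add_distrib] at e₁ e₂ e₃
  refine Int.eq_zero_of_two_mul_mul_eq hA ?_
  linear_combination e₃ - (1 + A p q) * e₁ - (1 + A q p) * e₂

end QuasitoricRing

section BottRing

variable {n : ℕ} (ε : Fin n → Fin n → ℤ)

def bottRow (j : Fin n) : Fin n → ℤ :=
  fun i => if i < j then ε j i else 0

lemma bottF_eq_linForm (j : Fin n) : bottF n ε j = linForm (bottRow ε j) := by
  rw [bottF, linForm]
  refine Finset.sum_congr rfl fun i _ => ?_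
  unfold bottRow
  split_ifs <;> simp

lemma linForm_mul_linForm_mem_bottIdeal (j : Fin n) :
    linForm (Pi.single j 1) * linForm (Pi.single j 1 - bottRow ε j) ∈ bottIdeal n ε := by
  rw [linForm_sub, linForm_single, ← bottF_eq_linForm]
  exact Ideal.subset_span ⟨j, rfl⟩

lemma bottRow_vecMul_apply_eq_zero {G : Matrix (Fin n) (Fin n) ℤ} {j t : Fin n}
    (h : ∀ i < j, G i t = 0) : (bottRow ε j ᵥ* G) t = 0 := by
  rw [vecMul, dotProduct]
  refine Finset.sum_eq_zero fun i _ => ?_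
  unfold bottRow
  split_ifs with hi
  · rw [h i hi, mul_zero]
  · rw [zero_mul]

variable {A : Matrix (Fin n) (Fin n) ℤ}

lemma linForm_mul_linForm_mem_quasiIdeal_of_map
    {ψ : (MvPolynomial (Fin n) ℤ ⧸ bottIdeal n ε) →+* (MvPolynomial (Fin n) ℤ ⧸ quasiIdeal n A)}
    {G : Matrix (Fin n) (Fin n) ℤ}
    (hG : ∀ v, ψ (Ideal.Quotient.mk _ (linForm v)) = Ideal.Quotient.mk _ (linForm (v ᵥ* G)))
    (j : Fin n) : linForm (G j) * linForm (G j - bottRow ε j ᵥ* G) ∈ quasiIdeal n A := by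
  have h := congrArg ψ
    (Ideal.Quotient.eq_zero_iff_mem.mpr (linForm_mul_linForm_mem_bottIdeal ε j))
  rw [map_mul, map_mul, hG, hG, map_zero, sub_vecMul, single_vecMul, one_smul, ← map_mul] at h
  exact Ideal.Quotient.eq_zero_iff_mem.mp h

/-- Once all earlier rows vanish at `p` and `q`, the two factors of the `j`-th relation agree
there. -/
lemma apply_eq_zero_of_linForm_mul_mem_quasiIdeal {p q : Fin n} (hp : A p p = 1)
    (hq : A q q = 1) (hA : A p q * A q p = 2) {G : Matrix (Fin n) (Fin n) ℤ}
    (hG : ∀ j, linForm (G j) * linForm (G j - bottRow ε j ᵥ* G) ∈ quasiIdeal n A)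
    (j : Fin n) : G j p = 0 ∧ G j q = 0 := by
  induction j using WellFoundedLT.induction with
  | _ j ih =>
    obtain ⟨c, hc⟩ := exists_mul_dotProduct_eq_of_mem_quasiIdeal (hG j)
    refine eq_zero_of_mul_dotProduct_eq hp hq hA hc ?_ ?_
    · simp [bottRow_vecMul_apply_eq_zero ε fun i hi => (ih i hi).1]
    · simp [bottRow_vecMul_apply_eq_zero ε fun i hi => (ih i hi).2]

end BottRing

/-- If `A` is an integer matrix with unit diagonal all of whose `2 × 2` principal minors are
`±1`, and `R_A` is isomorphic to a Bott ring by a ring isomorphism carrying the ℤ-span of the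
degree-two generators onto the ℤ-span of the degree-two generators, then
`a_{ij} a_{ji} = 0` for all `i ≠ j`. -/
theorem stmt9 (n : ℕ) (A : Matrix (Fin n) (Fin n) ℤ)
    (hdiag : ∀ j, A j j = 1)
    (hminor : ∀ i j : Fin n, i ≠ j → 1 - A i j * A j i = 1 ∨ 1 - A i j * A j i = -1)
    (ε : Fin n → Fin n → ℤ)
    (hiso : ∃ ψ : (MvPolynomial (Fin n) ℤ ⧸ bottIdeal n ε) ≃+*
        (MvPolynomial (Fin n) ℤ ⧸ quasiIdeal n A),
      Submodule.map (ψ : (MvPolynomial (Fin n) ℤ ⧸ bottIdeal n ε) →+*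
            (MvPolynomial (Fin n) ℤ ⧸ quasiIdeal n A)).toIntAlgHom.toLinearMap
          (Submodule.span ℤ
            (Set.range fun i : Fin n => Ideal.Quotient.mk (bottIdeal n ε) (X i))) =
        Submodule.span ℤ
          (Set.range fun i : Fin n => Ideal.Quotient.mk (quasiIdeal n A) (X i))) :
    ∀ i j : Fin n, i ≠ j → A i j * A j i = 0 := by
  intro p q hpq
  rcases hminor p q hpq with h | h
  · linarith
  obtain ⟨ψ, hspan⟩ := hiso
  obtain ⟨G, hG⟩ := exists_map_mk_linForm_eq_vecMul _ hspan.le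
  obtain ⟨d, hd⟩ := exists_map_mk_linForm_eq _ hspan.ge (Pi.single p 1)
  have hdG : d ᵥ* G = Pi.single p 1 :=
    eq_of_linForm_sub_mem_quasiIdeal (Ideal.Quotient.eq.mp ((hG d).symm.trans hd))
  have hGp : ∀ j, G j p = 0 := fun j =>
    (apply_eq_zero_of_linForm_mul_mem_quasiIdeal ε (hdiag p) (hdiag q) (by linarith)
      (linForm_mul_linForm_mem_quasiIdeal_of_map ε hG) j).1
  have := congrFun hdG p
  simp [vecMul, dotProduct, hGp] at this
end

section
/- Let n ≥ 2 and let α = ∑_{i=1}^{n−1} a_i·x_i and β = ∑_{i=1}^{n−1} b_i·x_i be elements of the degree-2 part of S_{n−1}, with integer coefficients a_i, b_i. There exists a graded ring automorphism φ of S_{n−1} with φ(α) ≡ β modulo 2 (i.e., φ(α) − β ∈ 2·H for H the degree-2 part) and φ(α²) = β² if and only if there exists a permutation σ of {1,…,n−1} such that a_{σ(i)} ≡ b_i (mod 2) for all i and |a_{σ(i)}·a_{σ(j)}| = |b_i·b_j| for all i ≠ j. -/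
open MvPolynomial

/-!
A graded automorphism `φ` of `S_m = ℤ[x₁,…,x_m]/(x_i²)` sends each `x_i` to a square-zero element
of the degree-two part `H`. Since `(∑ c_i x_i)²` records exactly the products `c_k c_l` with
`k ≠ l`, the square-zero elements of `H` are the multiples of single generators; applying this to
`φ` and `φ⁻¹` shows that the graded automorphisms are exactly the signed permutations
`x_{σ k} ↦ ε_k x_k`, `ε_k = ±1`. For these the two conditions read `ε_k a_{σ k} ≡ b_k (mod 2)` and
`ε_k ε_l a_{σ k} a_{σ l} = b_k b_l`. Signs are invisible modulo 2 and in absolute values, and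
conversely `ε_k = sign(a_{σ k}) sign(b_k)` turns equal absolute values of products into equal
products.
-/

theorem exists_eq_pi_single_of_mul_eq_zero {ι R : Type*} [DecidableEq ι] [Nonempty ι]
    [MulZeroClass R] [NoZeroDivisors R] {t : ι → R} (h : ∀ k l, k ≠ l → t k * t l = 0) :
    ∃ j, t = Pi.single j (t j) := by
  by_cases ht : t = 0
  · exact ⟨Classical.arbitrary ι, by simp [ht]⟩
  obtain ⟨j, hj⟩ := Function.ne_iff.mp ht
  refine ⟨j, funext fun k => ?_⟩
  rcases eq_or_ne k j with rfl | hk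
  · simp
  · simp [hk, (mul_eq_zero.mp (h k j hk)).resolve_right hj]

theorem LinearIndependent.eq_and_eq_one_of_apply_eq_smul {ι R M : Type*} [Ring R] [Nontrivial R]
    [AddCommGroup M] [Module R M] {v : ι → M} (hv : LinearIndependent R v) {i j : ι} {c : R}
    (h : v i = c • v j) : j = i ∧ c = 1 := by
  obtain rfl : i = j := hv.eq_of_smul_apply_eq_smul_apply 1 c i j one_ne_zero (by rwa [one_smul])
  exact ⟨rfl, (hv.smul_left_injective i (by simpa using h)).symm⟩

theorem exists_mem_span_sub_eq_smul_iff {ι M : Type*} [Fintype ι] [AddCommGroup M]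
    {v : ι → M} (hv : LinearIndependent ℤ v) (c d : ι → ℤ) (n : ℕ) :
    (∃ w ∈ Submodule.span ℤ (Set.range v), ∑ i, c i • v i - ∑ i, d i • v i = n • w) ↔
      ∀ i, c i ≡ d i [ZMOD n] := by
  constructor
  · rintro ⟨w, hw, hcd⟩ i
    obtain ⟨e, rfl⟩ := (Submodule.mem_span_range_iff_exists_fun ℤ).mp hw
    have := Fintype.linearIndependent_iff.mp hv (fun i => c i - d i - n * e i) (by
      simp only [sub_smul, mul_smul, Finset.sum_sub_distrib, hcd, natCast_zsmul, Finset.smul_sum,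
        sub_self])
    exact (Int.modEq_iff_dvd.mpr ⟨e i, by linarith [this i]⟩).symm
  · intro h
    choose e he using fun i => (h i).symm.dvd
    refine ⟨∑ i, e i • v i, (Submodule.mem_span_range_iff_exists_fun ℤ).mpr ⟨e, rfl⟩, ?_⟩
    simp only [← Finset.sum_sub_distrib, ← sub_smul, Finset.smul_sum, ← natCast_zsmul, smul_smul,
      he]

theorem Int.exists_unit_mul_eq_abs (a : ℤ) : ∃ u : ℤˣ, u * a = |a| := by
  rcases abs_choice a with h | h
  exacts [⟨1, by simp [h]⟩, ⟨-1, by simp [h]⟩]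

theorem exists_units_mul_mul_eq_of_abs_mul_eq {ι : Type*} (c b : ι → ℤ) :
    ∃ ε : ι → ℤˣ, ∀ i j, |c i * c j| = |b i * b j| → ε i * c i * (ε j * c j) = b i * b j := by
  choose u hu using fun i => Int.exists_unit_mul_eq_abs (c i)
  choose w hw using fun i => Int.exists_unit_mul_eq_abs (b i)
  have hw2 (i) : (w i : ℤ) * w i = 1 := by rw [← Units.val_mul, Int.units_mul_self, Units.val_one]
  refine ⟨fun i => u i * w i, fun i j h => ?_⟩
  calc ((u i * w i : ℤˣ) : ℤ) * c i * ((u j * w j : ℤˣ) * c j)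
      = w i * w j * ((u i * c i) * (u j * c j)) := by push_cast; ring
    _ = w i * w j * (|b i| * |b j|) := by rw [hu, hu, ← abs_mul, h, abs_mul]
    _ = (w i * w i) * (w j * w j) * (b i * b j) := by rw [← hw, ← hw]; ring
    _ = b i * b j := by rw [hw2, hw2, one_mul, one_mul]

theorem Int.units_mul_modEq_two (u : ℤˣ) (a : ℤ) : u * a ≡ a [ZMOD 2] := by
  rcases Int.units_eq_one_or u with rfl | rfl
  · simp [Int.ModEq.refl]
  · simp only [Units.val_neg, Units.val_one, neg_one_mul, Int.ModEq]
    omega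

theorem exists_units_modEq_two_and_mul_eq_iff {ι : Type*} (c b : ι → ℤ) :
    (∃ ε : ι → ℤˣ, (∀ k, ε k * c k ≡ b k [ZMOD 2]) ∧
        ∀ k l, k ≠ l → ε k * c k * (ε l * c l) = b k * b l) ↔
      (∀ k, c k ≡ b k [ZMOD 2]) ∧ ∀ k l, k ≠ l → |c k * c l| = |b k * b l| := by
  constructor
  · rintro ⟨ε, hmod, hmul⟩
    have habs (k : ι) : |(ε k : ℤ) * c k| = |c k| := by
      rw [abs_mul, Int.isUnit_iff_abs_eq.mp (ε k).isUnit, one_mul]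
    exact ⟨fun k => (Int.units_mul_modEq_two _ _).symm.trans (hmod k),
      fun k l hkl => by rw [← hmul k l hkl, abs_mul, abs_mul, habs, habs]⟩
  · rintro ⟨hmod, habs⟩
    obtain ⟨ε, hε⟩ := exists_units_mul_mul_eq_of_abs_mul_eq c b
    exact ⟨ε, fun k => (Int.units_mul_modEq_two _ _).trans (hmod k),
      fun k l hkl => hε k l (habs k l hkl)⟩

theorem coeff_eq_zero_of_mem_sqIdeal {m : ℕ} {p : MvPolynomial (Fin m) ℤ} (hp : p ∈ sqIdeal m)
    {d : Fin m →₀ ℕ} (hd : ∀ i, d i ≤ 1) : coeff d p = 0 := by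
  have hspan : sqIdeal m = Ideal.span ((fun s => monomial s (1 : ℤ)) ''
      Set.range fun i : Fin m => Finsupp.single i 2) := by
    rw [sqIdeal, ← Set.range_comp]
    simp [Function.comp_def, X_pow_eq_monomial]
  rw [hspan, mem_ideal_span_monomial_image] at hp
  by_contra h
  obtain ⟨_, ⟨i, rfl⟩, hle⟩ := hp d (mem_support_iff.mpr h)
  have := (hd i).trans' (hle i)
  simp at this

theorem coeff_sq_sum_C_mul_X {ι R : Type*} [Fintype ι] [CommSemiring R] (c : ι → R) {k l : ι}
    (hkl : k ≠ l) :
    coeff (Finsupp.single k 1 + Finsupp.single l 1) ((∑ i, C (c i) * X i) ^ 2) =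
      2 * (c k * c l) := by
  classical
  have hterm (i j : ι) : C (c i) * X i * (C (c j) * X j) =
      monomial (Finsupp.single i 1 + Finsupp.single j 1) (c i * c j) := by
    simp only [X, C_mul_monomial, monomial_mul, mul_one]
  simp only [sq, Finset.sum_mul_sum, hterm, coeff_sum, coeff_monomial,
    Finsupp.single_add_single_eq_single_add_single one_ne_zero one_ne_zero]
  rw [Fintype.sum_eq_add k l hkl (fun i hi => by simp [hi.1, hi.2])]
  simp only [true_and, hkl, hkl.symm, false_and, and_false, or_false, false_or,
    Finset.sum_ite_eq', Finset.mem_univ, ↓reduceIte]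
  ring

/-- The ring `S_m`. -/
abbrev SqQuot (m : ℕ) : Type := MvPolynomial (Fin m) ℤ ⧸ sqIdeal m

namespace SqQuot

variable {m : ℕ}

noncomputable def x (i : Fin m) : SqQuot m := Ideal.Quotient.mk (sqIdeal m) (X i)

noncomputable def degTwo (m : ℕ) : Submodule ℤ (SqQuot m) := Submodule.span ℤ (Set.range x)

theorem x_sq (i : Fin m) : x i ^ 2 = 0 :=
  (map_pow _ _ _).symm.trans (Ideal.Quotient.eq_zero_iff_mem.mpr (Ideal.subset_span ⟨i, rfl⟩))

theorem mk_C_mul (a : ℤ) (p : MvPolynomial (Fin m) ℤ) :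
    Ideal.Quotient.mk (sqIdeal m) (C a * p) = a • Ideal.Quotient.mk (sqIdeal m) p := by
  rw [← smul_eq_C_mul, ← Ideal.Quotient.mkₐ_eq_mk ℤ, map_smul]

theorem mk_sum_C_mul_X (c : Fin m → ℤ) :
    Ideal.Quotient.mk (sqIdeal m) (∑ i, C (c i) * X i) = ∑ i, c i • x i := by
  simp only [map_sum, mk_C_mul, x]

theorem linearIndependent_x : LinearIndependent ℤ (x (m := m)) := by
  classical
  refine Fintype.linearIndependent_iff.mpr fun c hc j => ?_
  rw [← mk_sum_C_mul_X, Ideal.Quotient.eq_zero_iff_mem] at hc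
  have := coeff_eq_zero_of_mem_sqIdeal hc (d := Finsupp.single j 1) fun i => by
    rw [Finsupp.single_apply]; split_ifs <;> omega
  simpa only [coeff_sum, coeff_C_mul, coeff_single_X, true_and, mul_ite, mul_one, mul_zero,
    Finset.sum_ite_eq', Finset.mem_univ, if_true] using this

theorem sum_smul_x_sq_eq_sq_iff {c d : Fin m → ℤ} :
    (∑ i, c i • x i) ^ 2 = (∑ i, d i • x i) ^ 2 ↔ ∀ k l, k ≠ l → c k * c l = d k * d l := by
  constructor
  · intro h k l hkl
    rw [← mk_sum_C_mul_X, ← mk_sum_C_mul_X, ← map_pow, ← map_pow, Ideal.Quotient.eq] at h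
    have := coeff_eq_zero_of_mem_sqIdeal h (d := Finsupp.single k 1 + Finsupp.single l 1)
      fun i => by simp only [Finsupp.add_apply, Finsupp.single_apply]; split_ifs <;> omega
    rw [coeff_sub, coeff_sq_sum_C_mul_X c hkl, coeff_sq_sum_C_mul_X d hkl] at this
    linarith
  · intro h
    simp only [sq, Finset.sum_mul_sum, smul_mul_smul_comm]
    refine Finset.sum_congr rfl fun k _ => Finset.sum_congr rfl fun l _ => ?_
    rcases eq_or_ne k l with rfl | hkl
    · rw [← sq (x k), x_sq, smul_zero, smul_zero]
    · rw [h k l hkl]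

theorem exists_eq_smul_x_of_sq_eq_zero [Nonempty (Fin m)] {u : SqQuot m} (hu : u ∈ degTwo m)
    (hu2 : u ^ 2 = 0) : ∃ j, ∃ c : ℤ, u = c • x j := by
  classical
  obtain ⟨t, rfl⟩ := (Submodule.mem_span_range_iff_exists_fun ℤ).mp hu
  have ht : ∀ k l, k ≠ l → t k * t l = 0 := by
    have : (∑ i, t i • x i) ^ 2 = (∑ i, (0 : ℤ) • x i) ^ 2 := by
      rw [hu2]; simp
    simpa using sum_smul_x_sq_eq_sq_iff.mp this
  obtain ⟨j, hj⟩ := exists_eq_pi_single_of_mul_eq_zero ht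
  exact ⟨j, t j, Fintype.sum_eq_single j fun i hi => by rw [hj, Pi.single_eq_of_ne hi, zero_smul]⟩

theorem exists_map_x_eq_smul_x {F : Type*} [FunLike F (SqQuot m) (SqQuot m)]
    [RingHomClass F (SqQuot m) (SqQuot m)] (f : F) (hf : ∀ i, f (x i) ∈ degTwo m) :
    ∃ ρ : Fin m → Fin m, ∃ d : Fin m → ℤ, ∀ i, f (x i) = d i • x (ρ i) := by
  have (i : Fin m) : ∃ j, ∃ c : ℤ, f (x i) = c • x j :=
    have : Nonempty (Fin m) := ⟨i⟩
    exists_eq_smul_x_of_sq_eq_zero (hf i) (by rw [← map_pow, x_sq, map_zero])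
  choose ρ d hρd using this
  exact ⟨ρ, d, hρd⟩

theorem exists_perm_units_of_map_degTwo_eq (φ : SqQuot m ≃+* SqQuot m)
    (hφ : (degTwo m).map φ.toRingHom.toIntAlgHom.toLinearMap = degTwo m) :
    ∃ σ : Equiv.Perm (Fin m), ∃ ε : Fin m → ℤˣ, ∀ k, φ (x (σ k)) = (ε k : ℤ) • x k := by
  have hx (i : Fin m) : x i ∈ degTwo m := Submodule.subset_span ⟨i, rfl⟩
  obtain ⟨ρ, d, hρd⟩ := exists_map_x_eq_smul_x φ fun i =>
    hφ ▸ Submodule.mem_map_of_mem (hx i)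
  obtain ⟨σ, c, hσc⟩ := exists_map_x_eq_smul_x φ.symm fun i => by
    obtain ⟨y, hy, hyx⟩ := Submodule.mem_map.mp (hφ.symm ▸ hx i)
    simpa [← hyx] using hy
  -- `φ⁻¹ ∘ φ = id = φ ∘ φ⁻¹` forces the index maps to be mutually inverse, the coefficients units.
  have hρσ (k : Fin m) : ρ (σ k) = k ∧ c k * d (σ k) = 1 := by
    refine linearIndependent_x.eq_and_eq_one_of_apply_eq_smul ?_
    have := congrArg φ (hσc k)
    rwa [RingEquiv.apply_symm_apply, map_zsmul, hρd, smul_smul] at this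
  have hσρ (i : Fin m) : σ (ρ i) = i := by
    refine (linearIndependent_x.eq_and_eq_one_of_apply_eq_smul (c := d i * c (ρ i)) ?_).1
    have := congrArg φ.symm (hρd i)
    rwa [RingEquiv.symm_apply_apply, map_zsmul, hσc, smul_smul] at this
  refine ⟨⟨σ, ρ, fun k => (hρσ k).1, hσρ⟩,
    fun k => Units.mkOfMulEqOne (d (σ k)) (c k) ((mul_comm _ _).trans (hρσ k).2), fun k => ?_⟩
  exact (hρd (σ k)).trans (by rw [(hρσ k).1, Units.val_mkOfMulEqOne])

theorem sqIdeal_le_comap_aeval (f : Fin m → Fin m) (c : Fin m → ℤ) :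
    sqIdeal m ≤ (sqIdeal m).comap (aeval fun i => C (c i) * X (f i)) := by
  refine Ideal.span_le.mpr ?_
  rintro _ ⟨i, rfl⟩
  simp only [SetLike.mem_coe, Ideal.mem_comap, map_pow, aeval_X, mul_pow]
  exact Ideal.mul_mem_left _ _ (Ideal.subset_span ⟨f i, rfl⟩)

noncomputable def scaleRename (f : Fin m → Fin m) (c : Fin m → ℤ) : SqQuot m →ₐ[ℤ] SqQuot m :=
  Ideal.quotientMapₐ (sqIdeal m) (aeval fun i => C (c i) * X (f i)) (sqIdeal_le_comap_aeval f c)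

theorem scaleRename_x (f : Fin m → Fin m) (c : Fin m → ℤ) (i : Fin m) :
    scaleRename f c (x i) = c i • x (f i) := by
  rw [x, scaleRename, Ideal.quotient_map_mkₐ, aeval_X, Ideal.Quotient.mkₐ_eq_mk, mk_C_mul, x]

theorem algHom_ext {f g : SqQuot m →ₐ[ℤ] SqQuot m} (h : ∀ i, f (x i) = g (x i)) : f = g :=
  Ideal.Quotient.algHom_ext ℤ (MvPolynomial.algHom_ext h)

noncomputable def signedPerm (σ : Equiv.Perm (Fin m)) (ε : Fin m → ℤˣ) :
    SqQuot m ≃+* SqQuot m :=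
  AlgEquiv.toRingEquiv <|
    AlgEquiv.ofAlgHom (scaleRename σ.symm fun i => ε (σ.symm i)) (scaleRename σ fun k => ε k)
    (algHom_ext fun i => by
      rw [AlgHom.comp_apply, scaleRename_x, map_zsmul, scaleRename_x, smul_smul,
        Equiv.symm_apply_apply, Int.isUnit_mul_self (ε _).isUnit, one_smul, AlgHom.id_apply])
    (algHom_ext fun k => by
      rw [AlgHom.comp_apply, scaleRename_x, map_zsmul, scaleRename_x, smul_smul,
        Equiv.apply_symm_apply, Int.isUnit_mul_self (ε _).isUnit, one_smul, AlgHom.id_apply])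

theorem signedPerm_x (σ : Equiv.Perm (Fin m)) (ε : Fin m → ℤˣ) (k : Fin m) :
    signedPerm σ ε (x (σ k)) = (ε k : ℤ) • x k := by
  rw [signedPerm, AlgEquiv.coe_ringEquiv, AlgEquiv.ofAlgHom_apply, scaleRename_x,
    Equiv.symm_apply_apply]

section SignedPermutation

variable {σ : Equiv.Perm (Fin m)} {ε : Fin m → ℤˣ} {φ : SqQuot m ≃+* SqQuot m}

theorem map_degTwo_eq_of_map_x_eq (hφ : ∀ k, φ (x (σ k)) = (ε k : ℤ) • x k) :
    (degTwo m).map φ.toRingHom.toIntAlgHom.toLinearMap = degTwo m := by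
  refine le_antisymm (Submodule.map_le_iff_le_comap.mpr (Submodule.span_le.mpr ?_))
    (Submodule.span_le.mpr ?_)
  · rintro _ ⟨i, rfl⟩
    show φ (x i) ∈ degTwo m
    rw [← σ.apply_symm_apply i, hφ]
    exact Submodule.smul_mem _ _ (Submodule.subset_span ⟨_, rfl⟩)
  · rintro _ ⟨k, rfl⟩
    refine ⟨(ε k : ℤ) • x (σ k), Submodule.smul_mem _ _ (Submodule.subset_span ⟨_, rfl⟩), ?_⟩
    show φ ((ε k : ℤ) • x (σ k)) = x k
    rw [map_zsmul, hφ, smul_smul, Int.isUnit_mul_self (ε k).isUnit, one_smul]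

theorem map_sum_smul_x (hφ : ∀ k, φ (x (σ k)) = (ε k : ℤ) • x k) (c : Fin m → ℤ) :
    φ (∑ i, c i • x i) = ∑ k, (ε k * c (σ k)) • x k := by
  rw [map_sum, ← Equiv.sum_comp σ]
  simp only [map_zsmul, hφ, smul_smul, mul_comm]

theorem modEq_two_and_map_sq_eq_iff (hφ : ∀ k, φ (x (σ k)) = (ε k : ℤ) • x k)
    (a b : Fin m → ℤ) :
    ((∃ w ∈ degTwo m, φ (Ideal.Quotient.mk (sqIdeal m) (∑ i, C (a i) * X i)) -
          Ideal.Quotient.mk (sqIdeal m) (∑ i, C (b i) * X i) = 2 • w) ∧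
      φ (Ideal.Quotient.mk (sqIdeal m) (∑ i, C (a i) * X i) ^ 2) =
        Ideal.Quotient.mk (sqIdeal m) (∑ i, C (b i) * X i) ^ 2) ↔
    (∀ k, ε k * a (σ k) ≡ b k [ZMOD 2]) ∧
      ∀ k l, k ≠ l → ε k * a (σ k) * (ε l * a (σ l)) = b k * b l := by
  rw [map_pow, mk_sum_C_mul_X, mk_sum_C_mul_X, map_sum_smul_x hφ, sum_smul_x_sq_eq_sq_iff,
    degTwo, exists_mem_span_sub_eq_smul_iff linearIndependent_x, Nat.cast_ofNat]

end SignedPermutation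

end SqQuot

theorem stmt12_general (n : ℕ) (a b : Fin (n - 1) → ℤ) :
    (∃ φ : (MvPolynomial (Fin (n - 1)) ℤ ⧸ sqIdeal (n - 1)) ≃+*
        (MvPolynomial (Fin (n - 1)) ℤ ⧸ sqIdeal (n - 1)),
      Submodule.map φ.toRingHom.toIntAlgHom.toLinearMap
          (Submodule.span ℤ (Set.range fun i : Fin (n - 1) =>
            Ideal.Quotient.mk (sqIdeal (n - 1)) (X i))) =
        Submodule.span ℤ (Set.range fun i : Fin (n - 1) =>
          Ideal.Quotient.mk (sqIdeal (n - 1)) (X i)) ∧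
      (∃ w ∈ Submodule.span ℤ (Set.range fun i : Fin (n - 1) =>
            Ideal.Quotient.mk (sqIdeal (n - 1)) (X i)),
        φ (Ideal.Quotient.mk (sqIdeal (n - 1)) (∑ i : Fin (n - 1), C (a i) * X i)) -
          Ideal.Quotient.mk (sqIdeal (n - 1)) (∑ i : Fin (n - 1), C (b i) * X i) =
            2 • w) ∧
      φ ((Ideal.Quotient.mk (sqIdeal (n - 1)) (∑ i : Fin (n - 1), C (a i) * X i)) ^ 2) =
        (Ideal.Quotient.mk (sqIdeal (n - 1)) (∑ i : Fin (n - 1), C (b i) * X i)) ^ 2) ↔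
    (∃ σ : Equiv.Perm (Fin (n - 1)),
      (∀ i, a (σ i) ≡ b i [ZMOD 2]) ∧
      ∀ i j, i ≠ j → |a (σ i) * a (σ j)| = |b i * b j|) := by
  refine Iff.trans ?_
    (exists_congr fun σ => exists_units_modEq_two_and_mul_eq_iff (fun i => a (σ i)) b)
  constructor
  · rintro ⟨φ, hφ, hcond⟩
    obtain ⟨σ, ε, hσε⟩ := SqQuot.exists_perm_units_of_map_degTwo_eq φ hφ
    exact ⟨σ, ε, (SqQuot.modEq_two_and_map_sq_eq_iff hσε a b).mp hcond⟩
  · rintro ⟨σ, ε, hcond⟩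
    have hσε := SqQuot.signedPerm_x σ ε
    exact ⟨SqQuot.signedPerm σ ε, SqQuot.map_degTwo_eq_of_map_x_eq hσε,
      (SqQuot.modEq_two_and_map_sq_eq_iff hσε a b).mpr hcond⟩

/-- For `α = ∑ a_i x_i` and `β = ∑ b_i x_i` in the degree-two part of `S_{n-1}`, there is a
graded ring automorphism `φ` of `S_{n-1}` with `φ(α) ≡ β (mod 2)` and `φ(α²) = β²` iff there
is a permutation `σ` with `a (σ i) ≡ b i (mod 2)` for all `i` and
`|a (σ i) * a (σ j)| = |b i * b j|` for all `i ≠ j`. -/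
theorem stmt12 (n : ℕ) (hn : 2 ≤ n) (a b : Fin (n - 1) → ℤ) :
    (∃ φ : (MvPolynomial (Fin (n - 1)) ℤ ⧸ sqIdeal (n - 1)) ≃+*
        (MvPolynomial (Fin (n - 1)) ℤ ⧸ sqIdeal (n - 1)),
      Submodule.map φ.toRingHom.toIntAlgHom.toLinearMap
          (Submodule.span ℤ (Set.range fun i : Fin (n - 1) =>
            Ideal.Quotient.mk (sqIdeal (n - 1)) (X i))) =
        Submodule.span ℤ (Set.range fun i : Fin (n - 1) =>
          Ideal.Quotient.mk (sqIdeal (n - 1)) (X i)) ∧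
      (∃ w ∈ Submodule.span ℤ (Set.range fun i : Fin (n - 1) =>
            Ideal.Quotient.mk (sqIdeal (n - 1)) (X i)),
        φ (Ideal.Quotient.mk (sqIdeal (n - 1)) (∑ i : Fin (n - 1), C (a i) * X i)) -
          Ideal.Quotient.mk (sqIdeal (n - 1)) (∑ i : Fin (n - 1), C (b i) * X i) =
            2 • w) ∧
      φ ((Ideal.Quotient.mk (sqIdeal (n - 1)) (∑ i : Fin (n - 1), C (a i) * X i)) ^ 2) =
        (Ideal.Quotient.mk (sqIdeal (n - 1)) (∑ i : Fin (n - 1), C (b i) * X i)) ^ 2) ↔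
    (∃ σ : Equiv.Perm (Fin (n - 1)),
      (∀ i, a (σ i) ≡ b i [ZMOD 2]) ∧
      ∀ i j, i ≠ j → |a (σ i) * a (σ j)| = |b i * b j|) :=
  stmt12_general n a b
end

section
/- Let n ≥ 2, let 1 ≤ i ≤ n−1, let a be an integer, and set α = a·x_i. Then R(α) = ℤ[x₁,…,x_{n−1}, y]/⟨x₁²,…,x_{n−1}², y² − αy⟩ is isomorphic as a graded ring to ℤ[z₁,…,z_n]/⟨z₁²,…,z_n²⟩ if and only if a is even. -/
/-!
In `ℤ[z]/⟨z_j²⟩` the square of every ℤ-combination of the generators is divisible by `2`,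
so a graded isomorphism forces `2 ∣ y²` in `R(α)`. For odd `a` this fails: `xᵢ ↦ s`,
`y ↦ t` defines a map to `𝔽₂[s,t]/⟨s², t² - st⟩`, the mod-`2` cohomology ring of the nontrivial
Hirzebruch surface, sending `y²` to `st ≠ 0` while killing `2`. For `a = 2b`, the substitution
`y ↦ y + b xᵢ` carries `y² - 2b xᵢ y` to `y² - b² xᵢ²`, so a change of generators gives
`R(α) ≅ ℤ[x, y]/⟨x_j², y²⟩`.
-/

open MvPolynomial

/-- The defining ideal `⟨x₁²,…,x_m², y² - αy⟩` of the cohomology ring `R(α)` of the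
one-twist Bott manifold `M(α)` over `(ℂP¹)^m`, where `α = ∑ a_i x_i`; the variable indexed
by `none` is `y`. -/
noncomputable def twistIdeal (m : ℕ) (a : Fin m → ℤ) :
    Ideal (MvPolynomial (Option (Fin m)) ℤ) :=
  Ideal.span
    ((Set.range fun i : Fin m => (X (some i) : MvPolynomial (Option (Fin m)) ℤ) ^ 2) ∪
      {X none ^ 2 - (∑ i : Fin m, C (a i) * X (some i)) * X none})

noncomputable def squaresIdeal (σ : Type*) : Ideal (MvPolynomial σ ℤ) :=
  Ideal.span (Set.range fun k : σ => X k ^ 2)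

def IsGradedRingEquiv {σ τ : Type*} {I : Ideal (MvPolynomial σ ℤ)}
    {J : Ideal (MvPolynomial τ ℤ)}
    (ψ : (MvPolynomial σ ℤ ⧸ I) ≃+* (MvPolynomial τ ℤ ⧸ J)) : Prop :=
  Submodule.map ψ.toRingHom.toIntAlgHom.toLinearMap
      (Submodule.span ℤ (Set.range fun k => Ideal.Quotient.mk I (X k))) =
    Submodule.span ℤ (Set.range fun k => Ideal.Quotient.mk J (X k))

section Graded

variable {σ τ υ : Type*}

theorem two_dvd_sq_of_mem_span {A : Type*} [CommRing A] {S : Set A} (hS : ∀ v ∈ S, v ^ 2 = 0)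
    {w : A} (hw : w ∈ Submodule.span ℤ S) : (2 : A) ∣ w ^ 2 := by
  induction hw using Submodule.span_induction with
  | mem v hv => simp [hS v hv]
  | zero => simp
  | add x y _ _ hx hy =>
    rw [add_sq]
    exact dvd_add (dvd_add hx (dvd_mul_of_dvd_left (dvd_mul_right 2 x) y)) hy
  | smul c x _ hx =>
    rw [zsmul_eq_mul, mul_pow]
    exact hx.mul_left _

theorem IsGradedRingEquiv.two_dvd_sq_mk_X {I : Ideal (MvPolynomial σ ℤ)}
    {ψ : (MvPolynomial σ ℤ ⧸ I) ≃+* (MvPolynomial τ ℤ ⧸ squaresIdeal τ)}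
    (hψ : IsGradedRingEquiv ψ) (k : σ) :
    (2 : MvPolynomial σ ℤ ⧸ I) ∣ Ideal.Quotient.mk I (X k) ^ 2 := by
  have hmem : ψ (Ideal.Quotient.mk I (X k)) ∈
      Submodule.span ℤ (Set.range fun l => Ideal.Quotient.mk (squaresIdeal τ) (X l)) :=
    hψ ▸ Submodule.mem_map_of_mem (Submodule.subset_span ⟨k, rfl⟩)
  have hsq : ∀ v ∈ Set.range fun l => Ideal.Quotient.mk (squaresIdeal τ) (X l), v ^ 2 = 0 := by
    rintro _ ⟨l, rfl⟩
    rw [← map_pow, Ideal.Quotient.eq_zero_iff_mem]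
    exact Ideal.subset_span ⟨l, rfl⟩
  simpa [map_ofNat] using map_dvd ψ.symm (two_dvd_sq_of_mem_span hsq hmem)

theorem IsGradedRingEquiv.trans {I : Ideal (MvPolynomial σ ℤ)} {J : Ideal (MvPolynomial τ ℤ)}
    {K : Ideal (MvPolynomial υ ℤ)} {ψ : (MvPolynomial σ ℤ ⧸ I) ≃+* (MvPolynomial τ ℤ ⧸ J)}
    {φ : (MvPolynomial τ ℤ ⧸ J) ≃+* (MvPolynomial υ ℤ ⧸ K)}
    (hψ : IsGradedRingEquiv ψ) (hφ : IsGradedRingEquiv φ) :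
    IsGradedRingEquiv (ψ.trans φ) := by
  rw [IsGradedRingEquiv, ← hφ, ← hψ]
  exact Submodule.map_comp ψ.toRingHom.toIntAlgHom.toLinearMap
    φ.toRingHom.toIntAlgHom.toLinearMap _

theorem mk_mem_span_mk_X (I : Ideal (MvPolynomial σ ℤ)) {p : MvPolynomial σ ℤ}
    (hp : p ∈ Submodule.span ℤ (Set.range X)) :
    Ideal.Quotient.mk I p ∈
      Submodule.span ℤ (Set.range fun k => Ideal.Quotient.mk I (X k)) := by
  have := Submodule.mem_map_of_mem (f := (Ideal.Quotient.mk I).toIntAlgHom.toLinearMap) hp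
  rwa [Submodule.map_span, ← Set.range_comp] at this

theorem isGradedRingEquiv_quotientEquiv {I : Ideal (MvPolynomial σ ℤ)}
    {J : Ideal (MvPolynomial τ ℤ)} (e : MvPolynomial σ ℤ ≃+* MvPolynomial τ ℤ)
    (hIJ : J = I.map (e : MvPolynomial σ ℤ →+* MvPolynomial τ ℤ))
    (he : ∀ k, e (X k) ∈ Submodule.span ℤ (Set.range X))
    (he_symm : ∀ l, e.symm (X l) ∈ Submodule.span ℤ (Set.range X)) :
    IsGradedRingEquiv (Ideal.quotientEquiv I J e hIJ) := by
  apply le_antisymm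
  · rw [Submodule.map_span, Submodule.span_le]
    rintro _ ⟨_, ⟨k, rfl⟩, rfl⟩
    exact mk_mem_span_mk_X J (he k)
  · rw [Submodule.span_le]
    rintro _ ⟨l, rfl⟩
    have h : Ideal.Quotient.mk J (X l) =
        Ideal.quotientEquiv I J e hIJ (Ideal.Quotient.mk I (e.symm (X l))) := by
      simp
    change Ideal.Quotient.mk J (X l) ∈ _
    rw [h]
    exact Submodule.mem_map_of_mem (mk_mem_span_mk_X I (he_symm l))

theorem map_renameEquiv_squaresIdeal (e : σ ≃ τ) :
    (squaresIdeal σ).map (renameEquiv ℤ e : MvPolynomial σ ℤ →+* MvPolynomial τ ℤ) =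
      squaresIdeal τ := by
  rw [squaresIdeal, squaresIdeal, Ideal.map_span, ← Set.range_comp,
    ← e.surjective.range_comp]
  congr 2
  ext k
  simp

theorem isGradedRingEquiv_renameEquiv (e : σ ≃ τ) :
    IsGradedRingEquiv (Ideal.quotientEquiv _ _ (renameEquiv ℤ e).toRingEquiv
      (map_renameEquiv_squaresIdeal e).symm) :=
  isGradedRingEquiv_quotientEquiv _ _ (fun k => Submodule.subset_span ⟨e k, by simp⟩)
    (fun l => Submodule.subset_span ⟨e.symm l, by simp⟩)

end Graded

section Shift

variable {σ : Type*} (i : σ) (c : ℤ)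

noncomputable def shiftY : MvPolynomial (Option σ) ℤ →ₐ[ℤ] MvPolynomial (Option σ) ℤ :=
  aeval (Option.elim · (X none + C c * X (some i)) fun j => X (some j))

@[simp] theorem shiftY_X_none : shiftY i c (X none) = X none + C c * X (some i) := by
  simp [shiftY]

@[simp] theorem shiftY_X_some (j : σ) : shiftY i c (X (some j)) = X (some j) := by
  simp [shiftY]

theorem shiftY_X_mem_span (k : Option σ) :
    shiftY i c (X k) ∈ Submodule.span ℤ (Set.range X) := by
  cases k with
  | none =>
    rw [shiftY_X_none, C_mul']
    exact add_mem (Submodule.subset_span ⟨none, rfl⟩)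
      (Submodule.smul_mem _ _ (Submodule.subset_span ⟨some i, rfl⟩))
  | some j =>
    rw [shiftY_X_some]
    exact Submodule.subset_span ⟨some j, rfl⟩

noncomputable def shiftYEquiv :
    MvPolynomial (Option σ) ℤ ≃ₐ[ℤ] MvPolynomial (Option σ) ℤ :=
  AlgEquiv.ofAlgHom (shiftY i c) (shiftY i (-c))
    (by ext (_ | j) <;> simp)
    (by ext (_ | j) <;> simp)

@[simp] theorem shiftYEquiv_apply (p : MvPolynomial (Option σ) ℤ) :
    shiftYEquiv i c p = shiftY i c p := rfl

end Shift

noncomputable def oddHirzebruchRelation : Polynomial (DualNumber (ZMod 2)) :=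
  Polynomial.X ^ 2 - Polynomial.C DualNumber.eps * Polynomial.X

-- `𝔽₂[s,t]/⟨s², t² - st⟩`, with `s = ε` and `t` the adjoined root.
abbrev OddHirzebruchModTwo : Type := AdjoinRoot oddHirzebruchRelation

namespace OddHirzebruchModTwo

noncomputable def s : OddHirzebruchModTwo := AdjoinRoot.of _ DualNumber.eps

noncomputable def t : OddHirzebruchModTwo := AdjoinRoot.root _

theorem s_sq : s ^ 2 = 0 := by
  rw [s, ← map_pow, sq, DualNumber.eps_mul_eps, map_zero]

theorem t_sq : t ^ 2 = s * t := by
  have h : AdjoinRoot.mk oddHirzebruchRelation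
      (Polynomial.X ^ 2 - Polynomial.C DualNumber.eps * Polynomial.X) = 0 := AdjoinRoot.mk_self
  rwa [map_sub, map_pow, map_mul, AdjoinRoot.mk_X, AdjoinRoot.mk_C, sub_eq_zero] at h

theorem two_eq_zero : (2 : OddHirzebruchModTwo) = 0 := by
  have h := congrArg (algebraMap (ZMod 2) OddHirzebruchModTwo) (by decide : (2 : ZMod 2) = 0)
  rwa [map_ofNat, map_zero] at h

theorem s_mul_t_ne_zero : s * t ≠ 0 := by
  have hmonic : oddHirzebruchRelation.Monic := Polynomial.monic_X_pow_sub (by compute_degree!)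
  have hdeg : oddHirzebruchRelation.natDegree = 2 := by
    unfold oddHirzebruchRelation; compute_degree!
  rw [s, t, ← AdjoinRoot.mk_C, ← AdjoinRoot.mk_X, ← map_mul, Ne, AdjoinRoot.mk_eq_zero]
  refine hmonic.not_dvd_of_natDegree_lt ?_ ?_
  · intro h
    have h1 := congrArg (fun p => TrivSqZeroExt.snd (p.coeff 1)) h
    simp at h1
  · rw [hdeg]
    compute_degree!

end OddHirzebruchModTwo

section Twist

variable {m : ℕ}

theorem twistIdeal_le_iff (a : Fin m → ℤ) {K : Ideal (MvPolynomial (Option (Fin m)) ℤ)} :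
    twistIdeal m a ≤ K ↔ (∀ j, X (some j) ^ 2 ∈ K) ∧
      X none ^ 2 - (∑ j, C (a j) * X (some j)) * X none ∈ K := by
  rw [twistIdeal, Ideal.span_le, Set.union_subset_iff, Set.range_subset_iff,
    Set.singleton_subset_iff]
  rfl

theorem sum_C_ite_mul_X (i : Fin m) (a : ℤ) :
    ∑ j, C (if j = i then a else 0) * (X (some j) : MvPolynomial (Option (Fin m)) ℤ) =
      C a * X (some i) := by
  simp [apply_ite C, ite_mul]

theorem map_shiftYEquiv_twistIdeal (i : Fin m) (b : ℤ) :
    (twistIdeal m fun j => if j = i then 2 * b else 0).map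
        ((shiftYEquiv i b).toRingEquiv : MvPolynomial (Option (Fin m)) ℤ →+* _) =
      squaresIdeal (Option (Fin m)) := by
  have hgen := (twistIdeal_le_iff (fun j => if j = i then 2 * b else 0)).mp le_rfl
  rw [sum_C_ite_mul_X] at hgen
  have hshift : shiftY i b (X none ^ 2 - C (2 * b) * X (some i) * X none) =
      X none ^ 2 - C b ^ 2 * X (some i) ^ 2 := by
    simp only [map_sub, map_pow, map_mul, shiftY_X_none, shiftY_X_some, algHom_C,
      algebraMap_eq, map_ofNat]
    ring
  apply le_antisymm
  · rw [Ideal.map_le_iff_le_comap, twistIdeal_le_iff, sum_C_ite_mul_X]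
    refine ⟨fun j => ?_, ?_⟩ <;> rw [Ideal.mem_comap]
    · simp only [RingHom.coe_coe, AlgEquiv.coe_ringEquiv, shiftYEquiv_apply, map_pow,
        shiftY_X_some]
      exact Ideal.subset_span ⟨some j, rfl⟩
    · simp only [RingHom.coe_coe, AlgEquiv.coe_ringEquiv, shiftYEquiv_apply, hshift]
      exact sub_mem (Ideal.subset_span ⟨none, rfl⟩)
        (Ideal.mul_mem_left _ _ (Ideal.subset_span ⟨some i, rfl⟩))
  · rw [squaresIdeal, Ideal.span_le]
    rintro _ ⟨(_ | j), rfl⟩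
    · have hy : X none ^ 2 = shiftY i b
          (X none ^ 2 - C (2 * b) * X (some i) * X none + C b ^ 2 * X (some i) ^ 2) := by
        rw [map_add, hshift]; simp
      change X none ^ 2 ∈ _
      rw [hy]
      exact Ideal.mem_map_of_mem _ (add_mem hgen.2 (Ideal.mul_mem_left _ _ (hgen.1 i)))
    · have hx : X (some j) ^ 2 = shiftY i b (X (some j) ^ 2) := by simp
      change X (some j) ^ 2 ∈ _
      rw [hx]
      exact Ideal.mem_map_of_mem _ (hgen.1 j)

theorem exists_isGradedRingEquiv_of_even {τ : Type*} (i : Fin m) (b : ℤ)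
    (e : Option (Fin m) ≃ τ) :
    ∃ ψ : (MvPolynomial (Option (Fin m)) ℤ ⧸
          twistIdeal m fun j => if j = i then 2 * b else 0) ≃+*
        (MvPolynomial τ ℤ ⧸ squaresIdeal τ), IsGradedRingEquiv ψ :=
  ⟨_, (isGradedRingEquiv_quotientEquiv (shiftYEquiv i b).toRingEquiv
      (map_shiftYEquiv_twistIdeal i b).symm (shiftY_X_mem_span i b)
      (shiftY_X_mem_span i (-b))).trans (isGradedRingEquiv_renameEquiv e)⟩

open OddHirzebruchModTwo in
noncomputable def twistEvalModTwo (i : Fin m) :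
    MvPolynomial (Option (Fin m)) ℤ →ₐ[ℤ] OddHirzebruchModTwo :=
  aeval (Option.elim · t fun j => if j = i then s else 0)

open OddHirzebruchModTwo in
theorem twistIdeal_le_ker_twistEvalModTwo {a : Fin m → ℤ} {i : Fin m} (ha : Odd (a i)) :
    twistIdeal m a ≤ RingHom.ker (twistEvalModTwo i) := by
  have ha' : (a i : OddHirzebruchModTwo) = 1 := by
    obtain ⟨k, hk⟩ := ha
    simp [hk, two_eq_zero]
  rw [twistIdeal_le_iff]
  refine ⟨fun j => ?_, ?_⟩ <;> rw [RingHom.mem_ker]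
  · simp only [twistEvalModTwo, map_pow, aeval_X, Option.elim_some]
    split_ifs <;> simp [s_sq]
  · simp [twistEvalModTwo, Finset.sum_ite_eq', ha', t_sq]

open OddHirzebruchModTwo in
theorem not_two_dvd_sq_mk_X_none {a : Fin m → ℤ} {i : Fin m} (ha : Odd (a i)) :
    ¬(2 : MvPolynomial (Option (Fin m)) ℤ ⧸ twistIdeal m a) ∣
      Ideal.Quotient.mk (twistIdeal m a) (X none) ^ 2 := by
  intro h
  have h' := map_dvd (Ideal.Quotient.lift _ (twistEvalModTwo i : _ →+* OddHirzebruchModTwo)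
    fun _ hp => RingHom.mem_ker.mp (twistIdeal_le_ker_twistEvalModTwo ha hp)) h
  rw [map_ofNat, map_pow, Ideal.Quotient.lift_mk, two_eq_zero, zero_dvd_iff] at h'
  simp only [twistEvalModTwo, RingHom.coe_coe, aeval_X,
    Option.elim_none, t_sq] at h'
  exact s_mul_t_ne_zero h'

end Twist

theorem stmt16_general (n : ℕ) (i : Fin (n - 1)) (a : ℤ) :
    (∃ ψ : (MvPolynomial (Option (Fin (n - 1))) ℤ ⧸
          twistIdeal (n - 1) fun j => if j = i then a else 0) ≃+*
        (MvPolynomial (Fin n) ℤ ⧸ sqIdeal n),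
      Submodule.map ψ.toRingHom.toIntAlgHom.toLinearMap
          (Submodule.span ℤ (Set.range fun k : Option (Fin (n - 1)) =>
            Ideal.Quotient.mk (twistIdeal (n - 1) fun j => if j = i then a else 0) (X k))) =
        Submodule.span ℤ (Set.range fun k : Fin n =>
          Ideal.Quotient.mk (sqIdeal n) (X k))) ↔ Even a := by
  constructor
  · rintro ⟨ψ, hψ⟩
    by_contra hodd
    exact not_two_dvd_sq_mk_X_none (i := i) (by simpa using Int.not_even_iff_odd.mp hodd)
      (IsGradedRingEquiv.two_dvd_sq_mk_X (τ := Fin n) hψ none)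
  · rintro ⟨b, rfl⟩
    have hn : n - 1 + 1 = n := Nat.sub_add_cancel (by have := i.2; omega)
    rw [← two_mul]
    exact exists_isGradedRingEquiv_of_even i b ((finSuccEquiv _).symm.trans (finCongr hn))

/-- For `α = a · x_i`, the ring `R(α)` is isomorphic as a graded ring (a ring isomorphism
carrying the ℤ-span of the degree-two generators onto the ℤ-span of the degree-two
generators) to `ℤ[z₁,…,z_n]/⟨z₁²,…,z_n²⟩` iff `a` is even. -/
theorem stmt16 (n : ℕ) (hn : 2 ≤ n) (i : Fin (n - 1)) (a : ℤ) :
    (∃ ψ : (MvPolynomial (Option (Fin (n - 1))) ℤ ⧸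
          twistIdeal (n - 1) fun j => if j = i then a else 0) ≃+*
        (MvPolynomial (Fin n) ℤ ⧸ sqIdeal n),
      Submodule.map ψ.toRingHom.toIntAlgHom.toLinearMap
          (Submodule.span ℤ (Set.range fun k : Option (Fin (n - 1)) =>
            Ideal.Quotient.mk (twistIdeal (n - 1) fun j => if j = i then a else 0) (X k))) =
        Submodule.span ℤ (Set.range fun k : Fin n =>
          Ideal.Quotient.mk (sqIdeal n) (X k))) ↔ Even a :=
  stmt16_general n i a
end
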